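/- If q̄_{n,s} ≥ 0 for all n, s, then problem P_τ attains its minimum: the feasible set is nonempty and there exists a feasible tuple (w*, b*, d*, γ*) such that F(w*, b*, d*, γ*) ≤ F(w, b, d, γ) for every feasible tuple (w, b, d, γ). -/

import Mathlib

open Finset

/-- Euclidean (ℓ₂) norm of a vector in ℝ^k. -/
noncomputable def e2 {k : ℕ} (v : Fin k → ℝ) : ℝ := Real.sqrt (∑ i, v i ^ 2)

/-- Inverter output `q_{n,s} = z_{n,s}ᵀ w_n + b_n` of the linear control rule. -/
noncomputable def qval {N S : ℕ} {M : Fin N → ℕ}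
    (z : (n : Fin N) → Fin S → Fin (M n) → ℝ)
    (w : (n : Fin N) → Fin (M n) → ℝ) (b : Fin N → ℝ)
    (n : Fin N) (s : Fin S) : ℝ :=
  (∑ i, z n s i * w n i) + b n

/-- Voltage deviation vector `X q_s + y_s` for scenario `s`. -/
noncomputable def vdev {N S : ℕ} {M : Fin N → ℕ}
    (X : Matrix (Fin N) (Fin N) ℝ)
    (z : (n : Fin N) → Fin S → Fin (M n) → ℝ)
    (y : Fin S → Fin N → ℝ)
    (w : (n : Fin N) → Fin (M n) → ℝ) (b : Fin N → ℝ)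
    (s : Fin S) : Fin N → ℝ :=
  X.mulVec (fun n => qval z w b n s) + y s

/-- Feasibility of `(w, b, d, γ)` for problem `P_τ`. -/
def FeasTau {N S : ℕ} {M : Fin N → ℕ}
    (X : Matrix (Fin N) (Fin N) ℝ)
    (z : (n : Fin N) → Fin S → Fin (M n) → ℝ)
    (y : Fin S → Fin N → ℝ)
    (qbar : Fin N → Fin S → ℝ) (τ : ℝ)
    (w : (n : Fin N) → Fin (M n) → ℝ) (b : Fin N → ℝ)
    (d : Fin S → ℝ) (γ : Fin N → ℝ) : Prop :=
  (∀ n s, |qval z w b n s| ≤ qbar n s) ∧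
  (∀ n, e2 (w n) ≤ γ n) ∧
  (∀ s, 0 ≤ d s ∧ e2 (vdev X z y w b s) ≤ d s + τ)

/-- Objective `F(w,b,d,γ) = (1/S)·Σ_s d_s + μ·Σ_n γ_n` of problem `P_τ`. -/
noncomputable def Fobj {N S : ℕ} (μ : ℝ) (d : Fin S → ℝ) (γ : Fin N → ℝ) : ℝ :=
  (1 / (S : ℝ)) * ∑ s, d s + μ * ∑ n, γ n

/-!
Eliminating the epigraph variables reduces `P_τ` to minimizing, over the rule `(w, b)` alone,
the continuous objective obtained with the smallest admissible slacks
`d_s = max 0 (‖X q_s + y_s‖₂ - τ)` and `γ_n = ‖w_n‖₂`, subject to the closed output limits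
`|q_{n,s}| ≤ q̄_{n,s}`, which `(0, 0)` satisfies because `q̄ ≥ 0`. Below the value at `(0, 0)`
the term `μ Σ_n ‖w_n‖₂` bounds `w`, and then the output limit of any single scenario bounds `b`,
so the relevant sublevel set is compact and the extreme value theorem applies.
-/

open Filter

lemma e2_nonneg {k : ℕ} (v : Fin k → ℝ) : 0 ≤ e2 v := Real.sqrt_nonneg _

lemma abs_le_e2 {k : ℕ} (v : Fin k → ℝ) (i : Fin k) : |v i| ≤ e2 v := by
  rw [← Real.sqrt_sq_eq_abs]
  exact Real.sqrt_le_sqrt (single_le_sum (fun j _ => sq_nonneg (v j)) (mem_univ i))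

@[fun_prop]
lemma continuous_e2 {k : ℕ} : Continuous (e2 : (Fin k → ℝ) → ℝ) := by
  unfold e2; fun_prop

section Fobj

variable {N S : ℕ} {μ : ℝ} {d d' : Fin S → ℝ} {γ γ' : Fin N → ℝ}

lemma Fobj_mono (hμ : 0 ≤ μ) (hd : d ≤ d') (hγ : γ ≤ γ') : Fobj μ d γ ≤ Fobj μ d' γ' := by
  unfold Fobj
  gcongr with s _ n _
  exacts [hd s, hγ n]

lemma le_div_of_Fobj_le (hμ : 0 < μ) (hd : 0 ≤ d) (hγ : 0 ≤ γ) {c : ℝ} (h : Fobj μ d γ ≤ c)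
    (n : Fin N) : γ n ≤ c / μ := by
  rw [le_div_iff₀' hμ]
  have hdsum : 0 ≤ (1 / (S : ℝ)) * ∑ s, d s :=
    mul_nonneg (one_div_nonneg.2 (Nat.cast_nonneg S)) (sum_nonneg fun s _ => hd s)
  calc μ * γ n ≤ μ * ∑ m, γ m := by gcongr; exact single_le_sum (fun m _ => hγ m) (mem_univ n)
    _ ≤ Fobj μ d γ := le_add_of_nonneg_left hdsum
    _ ≤ c := h

end Fobj

section Reduction

variable {N S : ℕ} {M : Fin N → ℕ} (X : Matrix (Fin N) (Fin N) ℝ)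
  (z : (n : Fin N) → Fin S → Fin (M n) → ℝ) (y : Fin S → Fin N → ℝ)
  (qbar : Fin N → Fin S → ℝ) (μ τ : ℝ)

def admissibleRules : Set (((n : Fin N) → Fin (M n) → ℝ) × (Fin N → ℝ)) :=
  {p | ∀ n s, |qval z p.1 p.2 n s| ≤ qbar n s}

noncomputable def optimalSlack (w : (n : Fin N) → Fin (M n) → ℝ) (b : Fin N → ℝ) :
    Fin S → ℝ :=
  fun s => max 0 (e2 (vdev X z y w b s) - τ)

noncomputable def reducedObjective (p : ((n : Fin N) → Fin (M n) → ℝ) × (Fin N → ℝ)) : ℝ :=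
  Fobj μ (optimalSlack X z y τ p.1 p.2) (fun n => e2 (p.1 n))

lemma isClosed_admissibleRules : IsClosed (admissibleRules (M := M) z qbar) := by
  simp only [admissibleRules, Set.ofPred_forall]
  refine isClosed_iInter fun n => isClosed_iInter fun s => isClosed_le ?_ continuous_const
  unfold qval; fun_prop

lemma zero_mem_admissibleRules (hqbar : ∀ n s, 0 ≤ qbar n s) :
    (0, 0) ∈ admissibleRules (M := M) z qbar := by
  simpa [admissibleRules, qval] using hqbar

lemma continuous_reducedObjective : Continuous (reducedObjective (M := M) X z y μ τ) := by
  have hvdev (s : Fin S) :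
      Continuous fun p : ((n : Fin N) → Fin (M n) → ℝ) × (Fin N → ℝ) => vdev X z y p.1 p.2 s := by
    unfold vdev qval; fun_prop
  unfold reducedObjective Fobj optimalSlack
  fun_prop

variable {X z y qbar μ τ}

lemma feasTau_optimalSlack {w : (n : Fin N) → Fin (M n) → ℝ} {b : Fin N → ℝ}
    (h : (w, b) ∈ admissibleRules z qbar) :
    FeasTau X z y qbar τ w b (optimalSlack X z y τ w b) (fun n => e2 (w n)) :=
  ⟨h, fun _ => le_rfl, fun _ => ⟨le_max_left _ _, sub_le_iff_le_add.mp (le_max_right _ _)⟩⟩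

lemma reducedObjective_le_Fobj (hμ : 0 ≤ μ) {w : (n : Fin N) → Fin (M n) → ℝ} {b : Fin N → ℝ}
    {d : Fin S → ℝ} {γ : Fin N → ℝ} (h : FeasTau X z y qbar τ w b d γ) :
    reducedObjective X z y μ τ (w, b) ≤ Fobj μ d γ :=
  Fobj_mono hμ (fun s => max_le (h.2.2 s).1 (sub_le_iff_le_add.mpr (h.2.2 s).2)) h.2.1

lemma e2_le_of_reducedObjective_le (hμ : 0 < μ)
    {p : ((n : Fin N) → Fin (M n) → ℝ) × (Fin N → ℝ)} {c : ℝ}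
    (h : reducedObjective X z y μ τ p ≤ c) (n : Fin N) : e2 (p.1 n) ≤ c / μ :=
  le_div_of_Fobj_le hμ (fun _ => le_max_left _ _) (fun _ => e2_nonneg _) h n

lemma abs_le_of_abs_qval_le {w : (n : Fin N) → Fin (M n) → ℝ} {b : Fin N → ℝ} {n : Fin N}
    {s : Fin S} {c : ℝ} (h : |qval z w b n s| ≤ c) :
    |b n| ≤ c + (∑ i, |z n s i|) * e2 (w n) := by
  have hb : b n = qval z w b n s - ∑ i, z n s i * w n i := by unfold qval; ring
  have hsum : |∑ i, z n s i * w n i| ≤ (∑ i, |z n s i|) * e2 (w n) := by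
    rw [sum_mul]
    refine (abs_sum_le_sum_abs _ _).trans (sum_le_sum fun i _ => ?_)
    rw [abs_mul]
    exact mul_le_mul_of_nonneg_left (abs_le_e2 _ i) (abs_nonneg _)
  rw [hb]
  exact (abs_sub _ _).trans (add_le_add h hsum)

variable (X y τ) in
theorem exists_isMinOn_reducedObjective (s₀ : Fin S) (hμ : 0 < μ)
    (hqbar : ∀ n s, 0 ≤ qbar n s) :
    ∃ p ∈ admissibleRules z qbar,
      IsMinOn (reducedObjective X z y μ τ) (admissibleRules z qbar) p := by
  set c := reducedObjective X z y μ τ 0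
  set B : Fin N → ℝ := fun n => qbar n s₀ + (∑ i, |z n s₀ i|) * (c / μ)
  set box : Set (((n : Fin N) → Fin (M n) → ℝ) × (Fin N → ℝ)) :=
    (Set.univ.pi fun _ => Set.univ.pi fun _ => Set.Icc (-(c / μ)) (c / μ)) ×ˢ
      Set.univ.pi fun n => Set.Icc (-B n) (B n)
  have hbox : IsCompact box :=
    (isCompact_univ_pi fun _ => isCompact_univ_pi fun _ => isCompact_Icc).prod
      (isCompact_univ_pi fun _ => isCompact_Icc)
  have hsublevel : ∀ p ∈ admissibleRules z qbar, reducedObjective X z y μ τ p ≤ c → p ∈ box := by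
    rintro ⟨w, b⟩ hadm hc
    have hw := e2_le_of_reducedObjective_le hμ hc
    refine ⟨fun n _ i _ => abs_le.mp ((abs_le_e2 _ i).trans (hw n)), fun n _ => abs_le.mp ?_⟩
    refine (abs_le_of_abs_qval_le (hadm n s₀)).trans ?_
    exact add_le_add_right
      (mul_le_mul_of_nonneg_left (hw n) (sum_nonneg fun i _ => abs_nonneg _)) _
  refine (continuous_reducedObjective X z y μ τ).continuousOn.exists_isMinOn'
    (isClosed_admissibleRules z qbar) (zero_mem_admissibleRules z qbar hqbar) ?_
  exact mem_inf_of_inter hbox.compl_mem_cocompact (mem_principal_self _)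
    fun p ⟨hpbox, hp⟩ => le_of_not_gt fun hlt => hpbox (hsublevel p hp hlt.le)

end Reduction

theorem min_attained_Ptau_general
    {N S : ℕ} (hS : 1 ≤ S)
    {M : Fin N → ℕ}
    (X : Matrix (Fin N) (Fin N) ℝ)
    (z : (n : Fin N) → Fin S → Fin (M n) → ℝ)
    (y : Fin S → Fin N → ℝ)
    (qbar : Fin N → Fin S → ℝ)
    (μ τ : ℝ) (hμ : 0 < μ)
    (hqbar : ∀ n s, 0 ≤ qbar n s) :
    ∃ (w : (n : Fin N) → Fin (M n) → ℝ) (b : Fin N → ℝ)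
      (d : Fin S → ℝ) (γ : Fin N → ℝ),
      FeasTau X z y qbar τ w b d γ ∧
      ∀ w' b' d' γ', FeasTau X z y qbar τ w' b' d' γ' →
        Fobj μ d γ ≤ Fobj μ d' γ' := by
  obtain ⟨⟨w, b⟩, hadm, hmin⟩ :=
    exists_isMinOn_reducedObjective X y τ ⟨0, hS⟩ hμ hqbar
  refine ⟨w, b, optimalSlack X z y τ w b, fun n => e2 (w n), feasTau_optimalSlack hadm, ?_⟩
  intro w' b' d' γ' h'
  have hadm' : (w', b') ∈ admissibleRules z qbar := h'.1
  exact (hmin hadm').trans (reducedObjective_le_Fobj hμ.le h')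

/-- if `q̄_{n,s} ≥ 0` for all `n, s`, then `P_τ` attains its minimum. -/
theorem min_attained_Ptau
    {N S : ℕ} (hN : 1 ≤ N) (hS : 1 ≤ S)
    {M : Fin N → ℕ} (hM : ∀ n, 1 ≤ M n)
    (X : Matrix (Fin N) (Fin N) ℝ)
    (z : (n : Fin N) → Fin S → Fin (M n) → ℝ)
    (y : Fin S → Fin N → ℝ)
    (qbar : Fin N → Fin S → ℝ)
    (μ τ : ℝ) (hμ : 0 < μ) (hτ : 0 < τ)
    (hqbar : ∀ n s, 0 ≤ qbar n s) :
    ∃ (w : (n : Fin N) → Fin (M n) → ℝ) (b : Fin N → ℝ)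
      (d : Fin S → ℝ) (γ : Fin N → ℝ),
      FeasTau X z y qbar τ w b d γ ∧
      ∀ w' b' d' γ', FeasTau X z y qbar τ w' b' d' γ' →
        Fobj μ d γ ≤ Fobj μ d' γ' :=
  min_attained_Ptau_general hS X z y qbar μ τ hμ hqbar
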